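/- The tensor product of two distributive join-semilattices with zero is a distributive join-semilattice with zero. Equivalently, if A and B are distributive join-semilattices with zero, then for bi-ideals I, J, K of A × B, (I ∨ J) ∩ K = (I ∩ K) ∨ (J ∩ K). -/

import Mathlib

variable {A B : Type*} [SemilatticeSup A] [OrderBot A] [SemilatticeSup B] [OrderBot B]

/-- A bi-ideal of `A × B`: a downward closed subset containing
`∇ = (A × {0}) ∪ ({0} × B)` that is closed under lateral joins. -/
def IsBiIdeal (I : Set (A × B)) : Prop :=
  (∀ ⦃p q : A × B⦄, q ≤ p → p ∈ I → q ∈ I) ∧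
  (∀ a : A, (a, (⊥ : B)) ∈ I) ∧
  (∀ b : B, ((⊥ : A), b) ∈ I) ∧
  (∀ a₀ a₁ : A, ∀ b : B, (a₀, b) ∈ I → (a₁, b) ∈ I → (a₀ ⊔ a₁, b) ∈ I) ∧
  (∀ a : A, ∀ b₀ b₁ : B, (a, b₀) ∈ I → (a, b₁) ∈ I → (a, b₀ ⊔ b₁) ∈ I)

/-- `∇ = (A × {0}) ∪ ({0} × B)`, the least bi-ideal. -/
def nabla (A B : Type*) [SemilatticeSup A] [OrderBot A] [SemilatticeSup B] [OrderBot B] :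
    Set (A × B) := {p | p.1 = ⊥ ∨ p.2 = ⊥}

/-- The pure tensor `a ⊗ b`. -/
def pureTensor (a : A) (b : B) : Set (A × B) :=
  nabla A B ∪ {p | p.1 ≤ a ∧ p.2 ≤ b}

/-- The bi-ideal generated by a subset `X` of `A × B`. -/
def biGen (X : Set (A × B)) : Set (A × B) := ⋂₀ {K | IsBiIdeal K ∧ X ⊆ K}

/-- The join of two bi-ideals in the lattice of bi-ideals. -/
def biSup (I J : Set (A × B)) : Set (A × B) := biGen (I ∪ J)

/-- Elements of the tensor product `A ⊗ B`: the compact (finitely generated) bi-ideals. -/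
def IsTensorElt (I : Set (A × B)) : Prop := ∃ S : Finset (A × B), I = biGen ↑S

/-- A join-semilattice is distributive if `u ≤ x₀ ⊔ x₁` implies
`u = x₀' ⊔ x₁'` for some `x₀' ≤ x₀`, `x₁' ≤ x₁`. -/
def IsDistribJoinSemilattice (A : Type*) [SemilatticeSup A] : Prop :=
  ∀ u x₀ x₁ : A, u ≤ x₀ ⊔ x₁ → ∃ x₀' x₁' : A, x₀' ≤ x₀ ∧ x₁' ≤ x₁ ∧ u = x₀' ⊔ x₁'

/-!
Fix `K` and put `L = (I ∩ K) ∨ (J ∩ K)`. The set `M` of all `p` such that every `q ≤ p` lying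
in `K` lies in `L` is a bi-ideal: it is downward closed and contains `∇` because `L` is, and if
`q ≤ (a₀ ⊔ a₁, b)` lies in `K`, distributivity of `A` splits `q.1 = x₀ ⊔ x₁` with `xᵢ ≤ aᵢ`, so
`q` is the lateral join of `(x₀, q.2)` and `(x₁, q.2)`, which lie in `K` and hence in `L`
(symmetrically in `B`). As `I` and `J` are downward closed, `M` contains them, hence `I ∨ J`,
which gives `(I ∨ J) ∩ K ⊆ L`. The reverse inclusion holds in any lattice.
-/

namespace IsBiIdeal

variable {I : Set (A × B)}

theorem isLowerSet (hI : IsBiIdeal I) : IsLowerSet I := hI.1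

theorem mk_bot_mem (hI : IsBiIdeal I) (a : A) : (a, (⊥ : B)) ∈ I := hI.2.1 a

theorem bot_mk_mem (hI : IsBiIdeal I) (b : B) : ((⊥ : A), b) ∈ I := hI.2.2.1 b

theorem sup_mk_mem (hI : IsBiIdeal I) {a₀ a₁ : A} {b : B} (h₀ : (a₀, b) ∈ I)
    (h₁ : (a₁, b) ∈ I) : (a₀ ⊔ a₁, b) ∈ I :=
  hI.2.2.2.1 a₀ a₁ b h₀ h₁

theorem mk_sup_mem (hI : IsBiIdeal I) {a : A} {b₀ b₁ : B} (h₀ : (a, b₀) ∈ I)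
    (h₁ : (a, b₁) ∈ I) : (a, b₀ ⊔ b₁) ∈ I :=
  hI.2.2.2.2 a b₀ b₁ h₀ h₁

theorem inter {J : Set (A × B)} (hI : IsBiIdeal I) (hJ : IsBiIdeal J) : IsBiIdeal (I ∩ J) :=
  ⟨hI.isLowerSet.inter hJ.isLowerSet,
    fun a => ⟨hI.mk_bot_mem a, hJ.mk_bot_mem a⟩,
    fun b => ⟨hI.bot_mk_mem b, hJ.bot_mk_mem b⟩,
    fun _ _ _ h₀ h₁ => ⟨hI.sup_mk_mem h₀.1 h₁.1, hJ.sup_mk_mem h₀.2 h₁.2⟩,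
    fun _ _ _ h₀ h₁ => ⟨hI.mk_sup_mem h₀.1 h₁.1, hJ.mk_sup_mem h₀.2 h₁.2⟩⟩

end IsBiIdeal

theorem biGen_isBiIdeal (X : Set (A × B)) : IsBiIdeal (biGen X) :=
  ⟨fun _ _ hqp hp K hK => hK.1.isLowerSet hqp (hp K hK),
    fun a _ hK => hK.1.mk_bot_mem a,
    fun b _ hK => hK.1.bot_mk_mem b,
    fun _ _ _ h₀ h₁ K hK => hK.1.sup_mk_mem (h₀ K hK) (h₁ K hK),
    fun _ _ _ h₀ h₁ K hK => hK.1.mk_sup_mem (h₀ K hK) (h₁ K hK)⟩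

theorem subset_biGen (X : Set (A × B)) : X ⊆ biGen X :=
  fun _ hp _ hK => hK.2 hp

theorem biGen_subset {X K : Set (A × B)} (hK : IsBiIdeal K) (hX : X ⊆ K) : biGen X ⊆ K :=
  fun _ hp => hp K ⟨hK, hX⟩

theorem left_subset_biSup (I J : Set (A × B)) : I ⊆ biSup I J :=
  Set.subset_union_left.trans (subset_biGen _)

theorem right_subset_biSup (I J : Set (A × B)) : J ⊆ biSup I J :=
  Set.subset_union_right.trans (subset_biGen _)

theorem biSup_subset {I J K : Set (A × B)} (hK : IsBiIdeal K) (hI : I ⊆ K) (hJ : J ⊆ K) :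
    biSup I J ⊆ K :=
  biGen_subset hK (Set.union_subset hI hJ)

/-- For lower sets `K` and `L` this is the Heyting implication `K ⇨ L` in the lattice of lower
sets: the largest lower set whose intersection with `K` lies in `L`. -/
def lowerHimp {α : Type*} [Preorder α] (K L : Set α) : Set α := {p | Set.Iic p ∩ K ⊆ L}

theorem subset_lowerHimp {α : Type*} [Preorder α] {I K L : Set α} (hI : IsLowerSet I)
    (hIKL : I ∩ K ⊆ L) : I ⊆ lowerHimp K L :=
  fun _ hp _ ⟨hqp, hqK⟩ => hIKL ⟨hI hqp hp, hqK⟩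

theorem isBiIdeal_lowerHimp (hA : IsDistribJoinSemilattice A) (hB : IsDistribJoinSemilattice B)
    {K L : Set (A × B)} (hK : IsLowerSet K) (hL : IsBiIdeal L) :
    IsBiIdeal (lowerHimp K L) := by
  refine ⟨fun p r hrp hp q ⟨hqr, hqK⟩ => hp ⟨hqr.trans hrp, hqK⟩, ?_, ?_, ?_, ?_⟩
  · rintro a ⟨x, y⟩ ⟨⟨-, hy : y ≤ ⊥⟩, -⟩
    rw [le_bot_iff.1 hy]
    exact hL.mk_bot_mem x
  · rintro b ⟨x, y⟩ ⟨⟨hx : x ≤ ⊥, -⟩, -⟩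
    rw [le_bot_iff.1 hx]
    exact hL.bot_mk_mem y
  · rintro a₀ a₁ b h₀ h₁ ⟨x, y⟩ ⟨⟨hx, hy⟩, hqK⟩
    obtain ⟨x₀, x₁, hx₀, hx₁, rfl⟩ := hA x a₀ a₁ hx
    exact hL.sup_mk_mem
      (h₀ ⟨⟨hx₀, hy⟩, hK (Prod.mk_le_mk_iff_left.2 le_sup_left) hqK⟩)
      (h₁ ⟨⟨hx₁, hy⟩, hK (Prod.mk_le_mk_iff_left.2 le_sup_right) hqK⟩)
  · rintro a b₀ b₁ h₀ h₁ ⟨x, y⟩ ⟨⟨hx, hy⟩, hqK⟩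
    obtain ⟨y₀, y₁, hy₀, hy₁, rfl⟩ := hB y b₀ b₁ hy
    exact hL.mk_sup_mem
      (h₀ ⟨⟨hx, hy₀⟩, hK (Prod.mk_le_mk_iff_right.2 le_sup_left) hqK⟩)
      (h₁ ⟨⟨hx, hy₁⟩, hK (Prod.mk_le_mk_iff_right.2 le_sup_right) hqK⟩)

/-- The tensor product of distributive semilattices with zero is distributive:
`(I ∨ J) ∩ K = (I ∩ K) ∨ (J ∩ K)` for bi-ideals. -/
theorem tensor_distrib {A B : Type*} [SemilatticeSup A] [OrderBot A]
    [SemilatticeSup B] [OrderBot B]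
    (hA : IsDistribJoinSemilattice A) (hB : IsDistribJoinSemilattice B)
    (I J K : Set (A × B)) (hI : IsBiIdeal I) (hJ : IsBiIdeal J) (hK : IsBiIdeal K) :
    biSup I J ∩ K = biSup (I ∩ K) (J ∩ K) := by
  refine subset_antisymm ?_ ?_
  · have hIJ : biSup I J ⊆ lowerHimp K (biSup (I ∩ K) (J ∩ K)) :=
      biSup_subset (isBiIdeal_lowerHimp hA hB hK.isLowerSet (biGen_isBiIdeal _))
        (subset_lowerHimp hI.isLowerSet (left_subset_biSup _ _))
        (subset_lowerHimp hJ.isLowerSet (right_subset_biSup _ _))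
    exact fun p ⟨hp, hpK⟩ => hIJ hp ⟨le_refl p, hpK⟩
  · exact biSup_subset ((biGen_isBiIdeal _).inter hK)
      (Set.inter_subset_inter_left K (left_subset_biSup I J))
      (Set.inter_subset_inter_left K (right_subset_biSup I J))
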